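/- arXiv:2602.12468 — 2 statements merged into one kernel-verified Lean document; each statement's English description precedes it below -/
import Mathlib

section
/- Theorem (Expected Probability): the probability that a random word of length l is accepted by A equals the sum over accepting states of the final state distribution; that is, Σ_{(s₁,…,s_l) ∈ Σ^l with evalFrom q₀ (s₁⋯s_l) ∈ F} ∏_{k=1}^l p_k(s_k) = Σ_{q ∈ F} (e_{q₀}ᵀ · M₁·M₂⋯M_l)[q], where e_{q₀} is the indicator vector of the start state. In other words, Algorithm 1 returns the expected probability E_{s}[s ∈ L(A)] for a word s sampled position-wise independently from p₁,…,p_l. -/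
/-!
Expanding the matrix product `M₁ ⋯ M_l` entrywise, its `(r, q)` entry is a sum over letter
sequences `a₁ ⋯ a_l`, and the transition matrices only let through the sequences whose run from
`r` ends in `q`, each weighted by `∏ p_k(a_k)`. Induction on `l` peels off the first letter.
Summing the row of `q₀` over `q ∈ F` then collects exactly the accepted words.
-/

open Finset Matrix

theorem Fintype.sum_fin_succ_pi {α M : Type*} [Fintype α] [AddCommMonoid M] {n : ℕ}
    (f : (Fin (n + 1) → α) → M) :
    ∑ s, f s = ∑ a, ∑ s : Fin n → α, f (Fin.cons a s) := by
  rw [← (Fin.consEquiv fun _ => α).sum_comp, Fintype.sum_prod_type]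
  rfl

section

variable {α Q R : Type*} [Fintype α] [Fintype Q] [DecidableEq Q] [CommSemiring R]

def transitionMatrix (step : Q → α → Q) (w : α → R) : Matrix Q Q R :=
  fun q q' => ∑ a ∈ univ.filter fun a => step q a = q', w a

theorem transitionMatrix_mul_apply (step : Q → α → Q) (w : α → R) (N : Matrix Q Q R) (r q : Q) :
    (transitionMatrix step w * N) r q = ∑ a, w a * N (step r a) q := by
  simp only [mul_apply, transitionMatrix, sum_mul]
  calc _ = ∑ q', ∑ a with step r a = q', w a * N (step r a) q :=
        sum_congr rfl fun q' _ => sum_congr rfl fun a ha => by rw [(mem_filter.mp ha).2]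
    _ = _ := sum_fiberwise univ (step r) _

theorem prod_transitionMatrix_apply (step : Q → α → Q) {l : ℕ} (p : Fin l → α → R) (r q : Q) :
    (List.ofFn fun k => transitionMatrix step (p k)).prod r q =
      ∑ s ∈ univ.filter fun s : Fin l → α => (List.ofFn s).foldl step r = q, ∏ k, p k (s k) := by
  induction l generalizing r with
  | zero =>
    rw [sum_filter]
    simp [one_apply, eq_comm]
  | succ n ih =>
    rw [List.ofFn_succ, List.prod_cons, transitionMatrix_mul_apply, sum_filter,
      Fintype.sum_fin_succ_pi]
    refine sum_congr rfl fun a _ => ?_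
    rw [ih (fun k => p k.succ), sum_filter, mul_sum]
    refine sum_congr rfl fun s _ => ?_
    simp [Fin.prod_univ_succ, mul_ite]

end

theorem expected_acceptance_probability_general
    {α Q : Type*} [Fintype α] [Fintype Q] [DecidableEq Q]
    (step : Q → α → Q) (q₀ : Q) (F : Finset Q) (l : ℕ)
    (p : Fin l → α → ℝ)
    (M : Fin l → Matrix Q Q ℝ)
    (hM : ∀ k q q', M k q q' = ∑ a ∈ Finset.univ.filter fun a => step q a = q', p k a)
    (e : Q → ℝ) (he : ∀ r, e r = if r = q₀ then 1 else 0) :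
    ∑ s ∈ Finset.univ.filter fun s : Fin l → α => (List.ofFn s).foldl step q₀ ∈ F,
        ∏ k, p k (s k)
      = ∑ q ∈ F, Matrix.vecMul e (List.ofFn M).prod q := by
  obtain rfl : M = fun k => transitionMatrix step (p k) := funext fun k => funext₂ (hM k)
  obtain rfl : e = Pi.single q₀ 1 := funext fun r => by rw [he, Pi.single_apply]
  simp only [single_one_vecMul, row_apply, prod_transitionMatrix_apply]
  exact (sum_fiberwise_eq_sum_filter univ F _ _).symm

/-- **Expected Probability.** The probability that a random word of length `l`
(the `k`-th letter sampled independently from `p k`) is accepted by the DFA equals the sum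
over accepting states of the final state distribution:
`Σ_{s ∈ α^l, evalFrom q₀ s ∈ F} ∏_k p k (s k) = Σ_{q ∈ F} (e_{q₀}ᵀ · M₁·M₂⋯M_l)[q]`,
where `e_{q₀}` is the indicator vector of the start state.  This is the value returned by
Algorithm 1. -/
theorem expected_acceptance_probability
    {α Q : Type*} [Fintype α] [Fintype Q] [DecidableEq Q]
    (step : Q → α → Q) (q₀ : Q) (F : Finset Q) (l : ℕ)
    (p : Fin l → α → ℝ)
    (hp0 : ∀ k a, 0 ≤ p k a) (hp1 : ∀ k, ∑ a, p k a = 1)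
    (M : Fin l → Matrix Q Q ℝ)
    (hM : ∀ k q q', M k q q' = ∑ a ∈ Finset.univ.filter fun a => step q a = q', p k a)
    (e : Q → ℝ) (he : ∀ r, e r = if r = q₀ then 1 else 0) :
    ∑ s ∈ Finset.univ.filter fun s : Fin l → α => (List.ofFn s).foldl step q₀ ∈ F,
        ∏ k, p k (s k)
      = ∑ q ∈ F, Matrix.vecMul e (List.ofFn M).prod q :=
  expected_acceptance_probability_general step q₀ F l p M hM e he
end

section
/- End-to-end correctness of the guidance score: for per-position token distributions p₁,…,p_l on V, the probability that the concatenation of l independently sampled tokens lies in L(A) equals the value computed by Algorithm 1 on the token-level automaton; that is, Σ_{(v₁,…,v_l) ∈ V^l with evalFrom q₀ (emb(v₁) ++ ⋯ ++ emb(v_l)) ∈ F} ∏_{k=1}^l p_k(v_k) = Σ_{q ∈ F} (e_{q₀}ᵀ · M₁^V·M₂^V⋯M_l^V)[q], where M_k^V[q][q'] = Σ_{v ∈ V : evalFrom q (emb v) = q'} p_k(v). -/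
/-!
Entry `(q, q')` of `M₁ ⋯ M_l` is the total weight of token sequences driving the automaton from
`q` to `q'`: peeling off the first token `v` sends `q` to `evalFrom q (emb v)`, which is exactly
how `M₁ * N` redistributes the weight of row `q`. Summing the row of `q₀` over `F` then collects
the weight of the accepted sequences.
-/

open Finset Matrix

section

variable {α V Q R : Type*} [Fintype V] [DecidableEq Q] [CommSemiring R]

def tokenTransitionMatrix (step : Q → α → Q) (emb : V → List α) (w : V → R) :
    Matrix Q Q R :=
  Matrix.of fun q q' => ∑ v with (emb v).foldl step q = q', w v

variable [Fintype Q] (step : Q → α → Q) (emb : V → List α)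

theorem tokenTransitionMatrix_mul_apply (w : V → R) (N : Matrix Q Q R) (q q' : Q) :
    (tokenTransitionMatrix step emb w * N) q q' = ∑ v, w v * N ((emb v).foldl step q) q' := by
  simp_rw [mul_apply, tokenTransitionMatrix, of_apply, sum_mul]
  rw [← sum_fiberwise univ (fun v => (emb v).foldl step q)]
  exact sum_congr rfl fun r _ => sum_congr rfl fun v hv => by rw [(mem_filter.1 hv).2]

theorem sum_prod_filter_foldl_eq_prod_tokenTransitionMatrix_apply :
    ∀ {l : ℕ} (p : Fin l → V → R) (q q' : Q),
      ∑ s : Fin l → V with ((List.ofFn s).map emb).flatten.foldl step q = q', ∏ k, p k (s k)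
        = (List.ofFn fun k => tokenTransitionMatrix step emb (p k)).prod q q'
  | 0, p, q, q' => by by_cases h : q = q' <;> simp [one_apply, h]
  | n + 1, p, q, q' => by
    rw [List.ofFn_succ, List.prod_cons, tokenTransitionMatrix_mul_apply, sum_filter,
      ← (Fin.consEquiv fun _ => V).sum_comp, Fintype.sum_prod_type]
    refine sum_congr rfl fun v _ => ?_
    rw [← sum_prod_filter_foldl_eq_prod_tokenTransitionMatrix_apply (fun k => p k.succ),
      sum_filter, mul_sum]
    refine sum_congr rfl fun t _ => ?_
    simp [Fin.consEquiv, Fin.prod_univ_succ, mul_ite]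

end

theorem guidance_score_end_to_end_general
    {α V Q : Type*} [Fintype V] [Fintype Q] [DecidableEq Q]
    (step : Q → α → Q) (q₀ : Q) (F : Finset Q)
    (emb : V → List α) (l : ℕ)
    (p : Fin l → V → ℝ)
    (MV : Fin l → Matrix Q Q ℝ)
    (hMV : ∀ k q q',
      MV k q q' = ∑ v ∈ Finset.univ.filter fun v => (emb v).foldl step q = q', p k v)
    (e : Q → ℝ) (he : ∀ r, e r = if r = q₀ then 1 else 0) :
    ∑ s ∈ Finset.univ.filter
        fun s : Fin l → V => ((List.ofFn s).map emb).flatten.foldl step q₀ ∈ F,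
        ∏ k, p k (s k)
      = ∑ q ∈ F, Matrix.vecMul e (List.ofFn MV).prod q := by
  have hMV_eq : MV = fun k => tokenTransitionMatrix step emb (p k) := by
    ext k q q'
    exact hMV k q q'
  have he_single : e = Pi.single q₀ 1 := by
    ext r
    rw [he, Pi.single_apply]
  rw [he_single, single_one_vecMul, hMV_eq, ← sum_fiberwise_eq_sum_filter]
  exact sum_congr rfl fun q _ =>
    sum_prod_filter_foldl_eq_prod_tokenTransitionMatrix_apply step emb p q₀ q

/-- **end-to-end correctness of the guidance score.** For per-position token
distributions `p₁,…,p_l` on the finite token alphabet `V`, the probability that the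
concatenation of `l` independently sampled tokens is accepted by the character-level DFA
equals the value computed by Algorithm 1 on the token-level automaton:
`Σ_{(v₁,…,v_l), evalFrom q₀ (emb v₁ ++ ⋯ ++ emb v_l) ∈ F} ∏_k p k (v k)
  = Σ_{q ∈ F} (e_{q₀}ᵀ · M₁^V·⋯·M_l^V)[q]`,
where `M_k^V[q][q'] = Σ_{v : evalFrom q (emb v) = q'} p k v` and `e_{q₀}` is the indicator
vector of the start state. -/
theorem guidance_score_end_to_end
    {α V Q : Type*} [Fintype V] [Fintype Q] [DecidableEq Q]
    (step : Q → α → Q) (q₀ : Q) (F : Finset Q)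
    (emb : V → List α) (l : ℕ)
    (p : Fin l → V → ℝ)
    (hp0 : ∀ k v, 0 ≤ p k v) (hp1 : ∀ k, ∑ v, p k v = 1)
    (MV : Fin l → Matrix Q Q ℝ)
    (hMV : ∀ k q q',
      MV k q q' = ∑ v ∈ Finset.univ.filter fun v => (emb v).foldl step q = q', p k v)
    (e : Q → ℝ) (he : ∀ r, e r = if r = q₀ then 1 else 0) :
    ∑ s ∈ Finset.univ.filter
        fun s : Fin l → V => ((List.ofFn s).map emb).flatten.foldl step q₀ ∈ F,
        ∏ k, p k (s k)
      = ∑ q ∈ F, Matrix.vecMul e (List.ofFn MV).prod q :=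
  guidance_score_end_to_end_general step q₀ F emb l p MV hMV e he
end
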